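/- arXiv:math/0403242 — 5 statements merged into one kernel-verified Lean document; each statement's English description precedes it below -/
import Mathlib

section
/- For every integer p with 0 ≤ p ≤ n and every linear map α : V → Λ^pV, the linear map Tα : V → Λ^pV defined by Tα(X) := α(X) − (1/(p+1)) X⌟(Σ_i e_i∧α(e_i)) − (1/(n−p+1)) X∧(Σ_i e_i⌟α(e_i)) satisfies Σ_j e_j∧(Tα)(e_j) = 0 and Σ_j e_j⌟(Tα)(e_j) = 0. In other words, the twistor projection of any element of V*⊗Λ^pV lies in the intersection 𝒯^{p,1} of the kernels of the wedge map α ↦ Σ_i e_i∧α(e_i) and the contraction map α ↦ Σ_i e_i⌟α(e_i). -/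
/-!
Statement 0: the twistor projection of any element of `V*⊗Λ^pV` lies in the
intersection `𝒯^{p,1}` of the kernels of the wedge map and the contraction map.
-/

open ExteriorAlgebra

variable {V : Type*} [NormedAddCommGroup V] [InnerProductSpace ℝ V]

/-- Exterior multiplication by the vector `X` on the exterior algebra `ΛV`. -/
noncomputable def wedgeOp (X : V) : ExteriorAlgebra ℝ V →ₗ[ℝ] ExteriorAlgebra ℝ V :=
  LinearMap.mulLeft ℝ (ExteriorAlgebra.ι ℝ X)

/-- Interior product (contraction) with the vector `X` on the exterior algebra `ΛV`,
the adjoint of `wedgeOp X` with respect to the inner product. -/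
noncomputable def contractOp (X : V) : ExteriorAlgebra ℝ V →ₗ[ℝ] ExteriorAlgebra ℝ V :=
  CliffordAlgebra.contractLeft (innerₗ V X)


lemma extPow_zero' : ⋀[ℝ]^0 V = (1 : Submodule ℝ (ExteriorAlgebra ℝ V)) := pow_zero _

lemma extPow_one' : ⋀[ℝ]^1 V = LinearMap.range (ExteriorAlgebra.ι ℝ (M := V)) := pow_one _

lemma extPow_succ' (p : ℕ) : ⋀[ℝ]^(p+1) V
    = LinearMap.range (ExteriorAlgebra.ι ℝ (M := V)) * ⋀[ℝ]^p V := pow_succ' _ _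

lemma wedgeOp_apply (X : V) (x : ExteriorAlgebra ℝ V) :
    wedgeOp X x = ExteriorAlgebra.ι ℝ X * x := rfl

lemma contractOp_wedgeOp (X Y : V) (x : ExteriorAlgebra ℝ V) :
    contractOp X (wedgeOp Y x) = (inner ℝ X Y : ℝ) • x - wedgeOp Y (contractOp X x) := by
  exact
    CliffordAlgebra.contractLeft_ι_mul (Q := (0 : QuadraticForm ℝ V)) (d := innerₗ V X) Y x

lemma contractOp_contractOp (X : V) (x : ExteriorAlgebra ℝ V) :
    contractOp X (contractOp X x) = 0 :=
  CliffordAlgebra.contractLeft_contractLeft _ x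

lemma wedgeOp_wedgeOp (X : V) (x : ExteriorAlgebra ℝ V) :
    wedgeOp X (wedgeOp X x) = 0 := by
  rw [wedgeOp_apply, wedgeOp_apply, ← mul_assoc, ExteriorAlgebra.ι_sq_zero, zero_mul]

lemma contractOp_zeroth (X : V) (x : ExteriorAlgebra ℝ V) (hx : x ∈ ⋀[ℝ]^0 V) :
    contractOp X x = 0 := by
  rw [extPow_zero', Submodule.one_eq_range] at hx
  obtain ⟨r, rfl⟩ := hx
  exact CliffordAlgebra.contractLeft_algebraMap _ _ r

lemma contractOp_mem (X : V) : ∀ (p : ℕ) (x : ExteriorAlgebra ℝ V),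
    x ∈ ⋀[ℝ]^(p+1) V → contractOp X x ∈ ⋀[ℝ]^p V := by
  intro p
  induction p with
  | zero =>
    intro x hx
    rw [extPow_one'] at hx
    obtain ⟨y, rfl⟩ := hx
    rw [show contractOp X (ExteriorAlgebra.ι ℝ y)
        = algebraMap ℝ _ (innerₗ V X y) from CliffordAlgebra.contractLeft_ι _ _ y]
    rw [extPow_zero', Submodule.one_eq_range]
    exact ⟨_, rfl⟩
  | succ q ih =>
    intro x hx
    rw [extPow_succ'] at hx
    refine Submodule.mul_induction_on hx ?_ ?_
    · rintro m ⟨y, rfl⟩ w hw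
      rw [show ExteriorAlgebra.ι ℝ y * w = wedgeOp y w from rfl, contractOp_wedgeOp]
      refine Submodule.sub_mem _ (Submodule.smul_mem _ _ hw) ?_
      rw [wedgeOp_apply, extPow_succ']
      exact Submodule.mul_mem_mul ⟨y, rfl⟩ (ih w hw)
    · intro a b ha hb
      rw [map_add]
      exact Submodule.add_mem _ ha hb

/-- The number operator identity: `∑ⱼ eⱼ ∧ (eⱼ ⌟ x) = p • x` on `Λᵖ`. -/
lemma sum_wedge_contract {n : ℕ} (e : OrthonormalBasis (Fin n) ℝ V) :
    ∀ (p : ℕ) (x : ExteriorAlgebra ℝ V), x ∈ ⋀[ℝ]^p V →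
      ∑ j, wedgeOp (e j) (contractOp (e j) x) = (p : ℝ) • x := by
  intro p
  induction p with
  | zero =>
    intro x hx
    simp [contractOp_zeroth _ _ hx]
  | succ q ih =>
    intro x hx
    rw [extPow_succ'] at hx
    refine Submodule.mul_induction_on hx ?_ ?_
    · rintro m ⟨y, rfl⟩ w hw
      have key : ∀ j, wedgeOp (e j) (contractOp (e j) (ExteriorAlgebra.ι ℝ y * w))
          = (inner ℝ (e j) y : ℝ) • (ExteriorAlgebra.ι ℝ (e j) * w)
            + ExteriorAlgebra.ι ℝ y * (ExteriorAlgebra.ι ℝ (e j)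
              * contractOp (e j) w) := by
        intro j
        rw [show ExteriorAlgebra.ι ℝ y * w = wedgeOp y w from rfl, contractOp_wedgeOp,
          map_sub, map_smul]
        have swap : ExteriorAlgebra.ι ℝ (e j) * (ExteriorAlgebra.ι ℝ y
            * contractOp (e j) w)
            = - (ExteriorAlgebra.ι ℝ y * (ExteriorAlgebra.ι ℝ (e j)
              * contractOp (e j) w)) := by
          rw [← mul_assoc, ← mul_assoc, ← neg_mul]
          congr 1
          exact eq_neg_of_add_eq_zero_left (ExteriorAlgebra.ι_add_mul_swap _ _)
        rw [wedgeOp_apply, wedgeOp_apply, wedgeOp_apply, swap]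
        abel
      rw [Finset.sum_congr rfl fun j _ => key j, Finset.sum_add_distrib]
      have h1 : ∑ j, (inner ℝ (e j) y : ℝ) • (ExteriorAlgebra.ι ℝ (e j) * w)
          = ExteriorAlgebra.ι ℝ y * w := by
        have : ∑ j, (inner ℝ (e j) y : ℝ) • ExteriorAlgebra.ι ℝ (e j)
            = ExteriorAlgebra.ι ℝ y := by
          have h := congrArg (ExteriorAlgebra.ι ℝ (M := V)) (e.sum_repr' y)
          simpa [map_sum] using h
        calc ∑ j, (inner ℝ (e j) y : ℝ) • (ExteriorAlgebra.ι ℝ (e j) * w)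
            = (∑ j, (inner ℝ (e j) y : ℝ) • ExteriorAlgebra.ι ℝ (e j)) * w := by
              rw [Finset.sum_mul]
              exact Finset.sum_congr rfl fun j _ => (smul_mul_assoc _ _ _).symm
          _ = ExteriorAlgebra.ι ℝ y * w := by rw [this]
      have h2 : ∑ j, ExteriorAlgebra.ι ℝ y * (ExteriorAlgebra.ι ℝ (e j)
          * contractOp (e j) w) = (q : ℝ) • (ExteriorAlgebra.ι ℝ y * w) := by
        rw [← Finset.mul_sum]
        have := ih w hw
        simp only [wedgeOp_apply] at this
        rw [this, mul_smul_comm]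
      rw [h1, h2]
      push_cast
      match_scalars <;> ring
    · intro a b ha hb
      simp only [map_add, Finset.sum_add_distrib, smul_add, ha, hb]

/-- `∑ⱼ eⱼ ⌟ (eⱼ ∧ x) = (n - p) • x` on `Λᵖ` (as consequence). -/
lemma sum_contract_wedge {n : ℕ} (e : OrthonormalBasis (Fin n) ℝ V)
    (x : ExteriorAlgebra ℝ V) :
    ∑ j, contractOp (e j) (wedgeOp (e j) x)
      = (n : ℝ) • x - ∑ j, wedgeOp (e j) (contractOp (e j) x) := by
  have : ∀ j : Fin n, contractOp (e j) (wedgeOp (e j) x)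
      = x - wedgeOp (e j) (contractOp (e j) x) := by
    intro j
    rw [contractOp_wedgeOp]
    congr 1
    rw [real_inner_self_eq_norm_sq, e.orthonormal.1 j]
    simp
  rw [Finset.sum_congr rfl fun j _ => this j, Finset.sum_sub_distrib]
  congr 1
  rw [Finset.sum_const, Finset.card_univ, Fintype.card_fin, Nat.cast_smul_eq_nsmul]

theorem twistor_projection_in_kernel
    [FiniteDimensional ℝ V] {n p : ℕ} (hn : Module.finrank ℝ V = n) (hp : p ≤ n)
    (e : OrthonormalBasis (Fin n) ℝ V)
    (α : V →ₗ[ℝ] ExteriorAlgebra ℝ V) (hα : ∀ X : V, α X ∈ ⋀[ℝ]^p V)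
    (T : V → ExteriorAlgebra ℝ V)
    (hT : ∀ X : V, T X = α X
        - (1 / ((p : ℝ) + 1)) • contractOp X (∑ i, wedgeOp (e i) (α (e i)))
        - (1 / ((n : ℝ) - (p : ℝ) + 1)) • wedgeOp X (∑ i, contractOp (e i) (α (e i)))) :
    ∑ j, wedgeOp (e j) (T (e j)) = 0 ∧ ∑ j, contractOp (e j) (T (e j)) = 0 := by
  set W : ExteriorAlgebra ℝ V := ∑ i, wedgeOp (e i) (α (e i)) with hW
  set C : ExteriorAlgebra ℝ V := ∑ i, contractOp (e i) (α (e i)) with hC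
  have hWmem : W ∈ ⋀[ℝ]^(p+1) V := by
    refine Submodule.sum_mem _ fun i _ => ?_
    rw [wedgeOp_apply, extPow_succ']
    exact Submodule.mul_mem_mul ⟨e i, rfl⟩ (hα (e i))
  have hp1 : ((p : ℝ) + 1) ≠ 0 := by positivity
  have hnp1 : ((n : ℝ) - (p : ℝ) + 1) ≠ 0 := by
    have : (p : ℝ) ≤ (n : ℝ) := by exact_mod_cast hp
    linarith
  constructor
  · calc ∑ j, wedgeOp (e j) (T (e j))
        = ∑ j, (wedgeOp (e j) (α (e j))
          - (1 / ((p : ℝ) + 1)) • wedgeOp (e j) (contractOp (e j) W)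
          - (1 / ((n : ℝ) - (p : ℝ) + 1)) • wedgeOp (e j) (wedgeOp (e j) C)) := by
          refine Finset.sum_congr rfl fun j _ => ?_
          rw [hT (e j), map_sub, map_sub, map_smul, map_smul]
      _ = W - (1 / ((p : ℝ) + 1)) • ∑ j, wedgeOp (e j) (contractOp (e j) W)
          - (1 / ((n : ℝ) - (p : ℝ) + 1)) • ∑ j, wedgeOp (e j) (wedgeOp (e j) C) := by
          rw [Finset.sum_sub_distrib, Finset.sum_sub_distrib, Finset.smul_sum,
            Finset.smul_sum]
      _ = 0 := by
          rw [sum_wedge_contract e (p+1) W hWmem]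
          simp only [wedgeOp_wedgeOp, Finset.sum_const_zero, smul_zero, sub_zero]
          rw [smul_smul]
          push_cast
          rw [one_div_mul_cancel hp1, one_smul, sub_self]
  · calc ∑ j, contractOp (e j) (T (e j))
        = ∑ j, (contractOp (e j) (α (e j))
          - (1 / ((p : ℝ) + 1)) • contractOp (e j) (contractOp (e j) W)
          - (1 / ((n : ℝ) - (p : ℝ) + 1)) • contractOp (e j) (wedgeOp (e j) C)) := by
          refine Finset.sum_congr rfl fun j _ => ?_
          rw [hT (e j), map_sub, map_sub, map_smul, map_smul]
      _ = C - (1 / ((n : ℝ) - (p : ℝ) + 1)) • ∑ j, contractOp (e j) (wedgeOp (e j) C) := by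
          rw [Finset.sum_sub_distrib, Finset.sum_sub_distrib]
          simp only [contractOp_contractOp, smul_zero, Finset.sum_const_zero, sub_zero]
          rw [← Finset.smul_sum, hC]
      _ = 0 := by
          rcases Nat.eq_zero_or_pos p with rfl | hppos
          · have hC0 : C = 0 := by
              rw [hC]
              refine Finset.sum_eq_zero fun i _ => contractOp_zeroth _ _ (hα (e i))
            rw [hC0]
            simp
          · obtain ⟨q, rfl⟩ : ∃ q, p = q + 1 := ⟨p - 1, (Nat.succ_pred_eq_of_pos hppos).symm⟩
            have hCmem : C ∈ ⋀[ℝ]^q V :=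
              Submodule.sum_mem _ fun i _ => contractOp_mem (e i) q _ (hα (e i))
            rw [sum_contract_wedge e C, sum_wedge_contract e q C hCmem]
            rw [smul_sub, smul_smul, smul_smul]
            push_cast
            rw [← sub_smul, ← mul_sub]
            rw [show ((n:ℝ) - ((q:ℝ)+1) + 1) = (n:ℝ) - q by ring,
              one_div_mul_cancel, one_smul, sub_self]
            have : (q : ℝ) + 1 ≤ (n : ℝ) := by
              push_cast at hp ⊢
              exact_mod_cast hp
            linarith
end

section
/- The operators 𝒦 := Σ_α 𝒥_α∘𝒥_α and C := Σ_α L_α∘Λ_α on the exterior algebra ΛV commute: C∘𝒦 = 𝒦∘C. -/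
/-!
Statement 4: the operators `𝒦 := Σ_α 𝒥_α∘𝒥_α` and `C := Σ_α L_α∘Λ_α` on the exterior
algebra `ΛV` of a quaternionic vector space commute: `C∘𝒦 = 𝒦∘C`.
-/

open ExteriorAlgebra
open scoped RealInnerProductSpace

variable {V : Type*} [NormedAddCommGroup V] [InnerProductSpace ℝ V]

/-- The operator `L_J := ½ Σᵢ (eᵢ∧)∘(Jeᵢ∧)` on `ΛV`. -/
noncomputable def Lop {n : ℕ} (e : OrthonormalBasis (Fin n) ℝ V) (J : V →ₗ[ℝ] V) :
    ExteriorAlgebra ℝ V →ₗ[ℝ] ExteriorAlgebra ℝ V :=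
  (1 / 2 : ℝ) • ∑ i, (wedgeOp (e i)).comp (wedgeOp (J (e i)))

/-- The operator `Λ_J := −½ Σᵢ (eᵢ⌟)∘(Jeᵢ⌟)` on `ΛV`. -/
noncomputable def Lambdaop {n : ℕ} (e : OrthonormalBasis (Fin n) ℝ V) (J : V →ₗ[ℝ] V) :
    ExteriorAlgebra ℝ V →ₗ[ℝ] ExteriorAlgebra ℝ V :=
  -((1 / 2 : ℝ) • ∑ i, (contractOp (e i)).comp (contractOp (J (e i))))

/-- The operator `𝒥_J := Σᵢ (Jeᵢ∧)∘(eᵢ⌟)` on `ΛV`. -/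
noncomputable def Jop {n : ℕ} (e : OrthonormalBasis (Fin n) ℝ V) (J : V →ₗ[ℝ] V) :
    ExteriorAlgebra ℝ V →ₗ[ℝ] ExteriorAlgebra ℝ V :=
  ∑ i, (wedgeOp (J (e i))).comp (contractOp (e i))

/-! ### Auxiliary material -/

section Aux

/-- `wedgeOp` bundled as a linear map in its vector argument. -/
noncomputable def wedgeL : V →ₗ[ℝ] (ExteriorAlgebra ℝ V →ₗ[ℝ] ExteriorAlgebra ℝ V) where
  toFun X := wedgeOp X
  map_add' x y := by
    ext z
    simp [wedgeOp, LinearMap.mulLeft_apply, add_mul]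
  map_smul' r x := by
    ext z
    simp [wedgeOp, LinearMap.mulLeft_apply, smul_mul_assoc]

/-- `contractOp` bundled as a linear map in its vector argument. -/
noncomputable def contractL : V →ₗ[ℝ] (ExteriorAlgebra ℝ V →ₗ[ℝ] ExteriorAlgebra ℝ V) where
  toFun X := contractOp X
  map_add' x y := by simp [contractOp, map_add]
  map_smul' r x := by simp [contractOp, map_smul]

@[simp] lemma wedgeL_apply (X : V) : (wedgeL : V →ₗ[ℝ] _) X = wedgeOp X := rfl
@[simp] lemma contractL_apply (X : V) : (contractL : V →ₗ[ℝ] _) X = contractOp X := rfl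

lemma wedge_wedge (X Y : V) : wedgeOp X * wedgeOp Y = -(wedgeOp Y * wedgeOp X) := by
  refine LinearMap.ext fun z => ?_
  simp only [wedgeOp, Module.End.mul_apply, LinearMap.neg_apply, LinearMap.mulLeft_apply]
  rw [← mul_assoc, ← mul_assoc, ← neg_mul,
    eq_neg_of_add_eq_zero_left (ExteriorAlgebra.ι_add_mul_swap X Y)]

lemma contract_contract (X Y : V) :
    contractOp X * contractOp Y = -(contractOp Y * contractOp X) := by
  refine LinearMap.ext fun z => ?_
  simp only [contractOp, Module.End.mul_apply, LinearMap.neg_apply]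
  exact CliffordAlgebra.contractLeft_comm _ _ z

lemma contract_wedge (X Y : V) :
    contractOp X * wedgeOp Y = ⟪X, Y⟫ • (1 : ExteriorAlgebra ℝ V →ₗ[ℝ] ExteriorAlgebra ℝ V)
      - wedgeOp Y * contractOp X := by
  refine LinearMap.ext fun z => ?_
  simp only [contractOp, wedgeOp, Module.End.mul_apply, LinearMap.sub_apply,
    LinearMap.smul_apply, Module.End.one_apply, LinearMap.mulLeft_apply]
  rw [CliffordAlgebra.contractLeft_ι_mul]
  simp

lemma wedge_comm_pair (v x y : V) :
    wedgeOp v * (wedgeOp x * wedgeOp y) = (wedgeOp x * wedgeOp y) * wedgeOp v := by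
  rw [← mul_assoc, wedge_wedge v x, neg_mul (α := Module.End ℝ (ExteriorAlgebra ℝ V)), mul_assoc, wedge_wedge v y, mul_neg (α := Module.End ℝ (ExteriorAlgebra ℝ V)), neg_neg (G := Module.End ℝ (ExteriorAlgebra ℝ V)),
    ← mul_assoc]

lemma contract_comm_pair (v x y : V) :
    contractOp v * (contractOp x * contractOp y)
      = (contractOp x * contractOp y) * contractOp v := by
  rw [← mul_assoc, contract_contract v x, neg_mul (α := Module.End ℝ (ExteriorAlgebra ℝ V)), mul_assoc, contract_contract v y, mul_neg (α := Module.End ℝ (ExteriorAlgebra ℝ V)),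
    neg_neg (G := Module.End ℝ (ExteriorAlgebra ℝ V)), ← mul_assoc]

lemma contract_mul_wedge_pair (u x y : V) :
    contractOp u * (wedgeOp x * wedgeOp y)
      = ⟪u, x⟫ • wedgeOp y - ⟪u, y⟫ • wedgeOp x + (wedgeOp x * wedgeOp y) * contractOp u := by
  calc contractOp u * (wedgeOp x * wedgeOp y)
      = (contractOp u * wedgeOp x) * wedgeOp y := (mul_assoc _ _ _).symm
    _ = (⟪u, x⟫ • 1 - wedgeOp x * contractOp u) * wedgeOp y := by rw [contract_wedge]
    _ = ⟪u, x⟫ • wedgeOp y - wedgeOp x * (contractOp u * wedgeOp y) := by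
        rw [sub_mul, smul_mul_assoc, one_mul, mul_assoc]
    _ = ⟪u, x⟫ • wedgeOp y - wedgeOp x * (⟪u, y⟫ • 1 - wedgeOp y * contractOp u) := by
        rw [contract_wedge]
    _ = ⟪u, x⟫ • wedgeOp y - ⟪u, y⟫ • wedgeOp x + (wedgeOp x * wedgeOp y) * contractOp u := by
        rw [mul_sub, mul_smul_comm, mul_one, ← mul_assoc]
        abel

lemma contract_pair_mul_wedge (x y v : V) :
    (contractOp x * contractOp y) * wedgeOp v
      = ⟪y, v⟫ • contractOp x - ⟪x, v⟫ • contractOp y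
        + wedgeOp v * (contractOp x * contractOp y) := by
  calc (contractOp x * contractOp y) * wedgeOp v
      = contractOp x * (contractOp y * wedgeOp v) := mul_assoc _ _ _
    _ = contractOp x * (⟪y, v⟫ • 1 - wedgeOp v * contractOp y) := by rw [contract_wedge]
    _ = ⟪y, v⟫ • contractOp x - (contractOp x * wedgeOp v) * contractOp y := by
        rw [mul_sub, mul_smul_comm, mul_one, ← mul_assoc]
    _ = ⟪y, v⟫ • contractOp x - (⟪x, v⟫ • 1 - wedgeOp v * contractOp x) * contractOp y := by
        rw [contract_wedge]
    _ = ⟪y, v⟫ • contractOp x - ⟪x, v⟫ • contractOp y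
        + wedgeOp v * (contractOp x * contractOp y) := by
        rw [sub_mul, smul_mul_assoc, one_mul, mul_assoc]
        abel

/-- Expanding a vector over an orthonormal basis, inside a linear map. -/
lemma expand_sum {n : ℕ} (e : OrthonormalBasis (Fin n) ℝ V) {N : Type*} [AddCommGroup N]
    [Module ℝ N] (f : V →ₗ[ℝ] N) (x : V) : ∑ i, ⟪e i, x⟫ • f (e i) = f x := by
  conv_rhs => rw [← e.sum_repr' x]
  rw [map_sum]
  simp_rw [LinearMap.map_smul]

/-- Moving an adjoint across the two slots of a sum over an orthonormal basis. -/
lemma reindex {n : ℕ} (e : OrthonormalBasis (Fin n) ℝ V)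
    (f g : V →ₗ[ℝ] (ExteriorAlgebra ℝ V →ₗ[ℝ] ExteriorAlgebra ℝ V)) (M Mt : V →ₗ[ℝ] V)
    (h : ∀ v w : V, ⟪M v, w⟫ = ⟪v, Mt w⟫) :
    ∑ i, f (M (e i)) * g (e i) = ∑ i, f (e i) * g (Mt (e i)) := by
  have step1 : ∀ i, f (M (e i)) * g (e i) = ∑ j, ⟪e j, M (e i)⟫ • (f (e j) * g (e i)) := by
    intro i
    conv_lhs => rw [← e.sum_repr' (M (e i)), map_sum]
    rw [Finset.sum_mul]
    simp_rw [LinearMap.map_smul, smul_mul_assoc]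
    -- handled by map_smul.
  have step2 : ∀ j, f (e j) * g (Mt (e j)) = ∑ i, ⟪e i, Mt (e j)⟫ • (f (e j) * g (e i)) := by
    intro j
    conv_lhs => rw [← e.sum_repr' (Mt (e j)), map_sum]
    rw [Finset.mul_sum]
    simp_rw [LinearMap.map_smul, mul_smul_comm]
  simp_rw [step1, step2]
  rw [Finset.sum_comm]
  refine Finset.sum_congr rfl fun j _ => Finset.sum_congr rfl fun i _ => ?_
  congr 1
  rw [real_inner_comm, h]

lemma Lop_eq {n : ℕ} (e : OrthonormalBasis (Fin n) ℝ V) (A : V →ₗ[ℝ] V) :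
    Lop e A = (1 / 2 : ℝ) • ∑ i, wedgeOp (e i) * wedgeOp (A (e i)) := rfl

lemma Lambdaop_eq {n : ℕ} (e : OrthonormalBasis (Fin n) ℝ V) (A : V →ₗ[ℝ] V) :
    Lambdaop e A = -((1 / 2 : ℝ) • ∑ i, contractOp (e i) * contractOp (A (e i))) := rfl

lemma Jop_eq {n : ℕ} (e : OrthonormalBasis (Fin n) ℝ V) (B : V →ₗ[ℝ] V) :
    Jop e B = ∑ i, wedgeOp (B (e i)) * contractOp (e i) := rfl

lemma Lop_add {n : ℕ} (e : OrthonormalBasis (Fin n) ℝ V) (A B : V →ₗ[ℝ] V) :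
    Lop e (A + B) = Lop e A + Lop e B := by
  simp only [Lop_eq, LinearMap.add_apply, map_add, ← wedgeL_apply, mul_add,
    Finset.sum_add_distrib, smul_add]

lemma Lop_neg {n : ℕ} (e : OrthonormalBasis (Fin n) ℝ V) (A : V →ₗ[ℝ] V) :
    Lop e (-A) = -(Lop e A) := by
  simp only [Lop_eq, LinearMap.neg_apply, map_neg, ← wedgeL_apply, mul_neg (α := Module.End ℝ (ExteriorAlgebra ℝ V)),
    Finset.sum_neg_distrib, smul_neg]

lemma Lop_zero {n : ℕ} (e : OrthonormalBasis (Fin n) ℝ V) :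
    Lop e (0 : V →ₗ[ℝ] V) = 0 := by
  simp only [Lop_eq, LinearMap.zero_apply, map_zero, ← wedgeL_apply, mul_zero,
    Finset.sum_const_zero, smul_zero]

lemma Lambdaop_add {n : ℕ} (e : OrthonormalBasis (Fin n) ℝ V) (A B : V →ₗ[ℝ] V) :
    Lambdaop e (A + B) = Lambdaop e A + Lambdaop e B := by
  simp only [Lambdaop_eq, LinearMap.add_apply, map_add, ← contractL_apply, mul_add,
    Finset.sum_add_distrib, smul_add, neg_add]

lemma Lambdaop_neg {n : ℕ} (e : OrthonormalBasis (Fin n) ℝ V) (A : V →ₗ[ℝ] V) :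
    Lambdaop e (-A) = -(Lambdaop e A) := by
  simp only [Lambdaop_eq, LinearMap.neg_apply, map_neg, ← contractL_apply, mul_neg (α := Module.End ℝ (ExteriorAlgebra ℝ V)),
    Finset.sum_neg_distrib, smul_neg, neg_neg]

lemma Lambdaop_zero {n : ℕ} (e : OrthonormalBasis (Fin n) ℝ V) :
    Lambdaop e (0 : V →ₗ[ℝ] V) = 0 := by
  simp only [Lambdaop_eq, LinearMap.zero_apply, map_zero, ← contractL_apply, mul_zero,
    Finset.sum_const_zero, smul_zero, neg_zero]


lemma wedgeOp_neg (x : V) : wedgeOp (-x) = -(wedgeOp x) := map_neg wedgeL x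

lemma wedgeOp_sub (x y : V) : wedgeOp (x - y) = wedgeOp x - wedgeOp y := map_sub wedgeL x y

lemma contractOp_neg (x : V) : contractOp (-x) = -(contractOp x) := map_neg contractL x

lemma contractOp_sub (x y : V) : contractOp (x - y) = contractOp x - contractOp y :=
  map_sub contractL x y

lemma expand_wedge {n : ℕ} (e : OrthonormalBasis (Fin n) ℝ V) (x : V) :
    ∑ i, ⟪e i, x⟫ • wedgeOp (e i) = wedgeOp x := by
  have h := expand_sum e wedgeL x
  simpa only [wedgeL_apply] using h

lemma expand_wedgeA' {n : ℕ} (e : OrthonormalBasis (Fin n) ℝ V) (A : V →ₗ[ℝ] V) (x : V) :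
    ∑ i, ⟪x, e i⟫ • wedgeOp (A (e i)) = wedgeOp (A x) := by
  have h := expand_sum e (wedgeL ∘ₗ A) x
  simp only [LinearMap.comp_apply, wedgeL_apply] at h
  have hc : ∀ i : Fin n, ⟪x, e i⟫ = ⟪e i, x⟫ := fun i => real_inner_comm _ _
  simp_rw [hc]
  exact h

lemma expand_wedge_skew {n : ℕ} (e : OrthonormalBasis (Fin n) ℝ V) (A : V →ₗ[ℝ] V)
    (hA : ∀ v w : V, ⟪A v, w⟫ = -⟪v, A w⟫) (x : V) :
    ∑ i, ⟪x, A (e i)⟫ • wedgeOp (e i) = -(wedgeOp (A x)) := by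
  have h := expand_wedge e (A x)
  have h1 : ∀ i : Fin n, ⟪x, A (e i)⟫ = -⟪e i, A x⟫ := fun i => by rw [real_inner_comm, hA]
  simp_rw [h1, neg_smul (M := Module.End ℝ (ExteriorAlgebra ℝ V))]
  rw [Finset.sum_neg_distrib, h]

lemma expand_contract {n : ℕ} (e : OrthonormalBasis (Fin n) ℝ V) (x : V) :
    ∑ i, ⟪e i, x⟫ • contractOp (e i) = contractOp x := by
  have h := expand_sum e contractL x
  simpa only [contractL_apply] using h

lemma expand_contractA {n : ℕ} (e : OrthonormalBasis (Fin n) ℝ V) (A : V →ₗ[ℝ] V) (x : V) :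
    ∑ i, ⟪e i, x⟫ • contractOp (A (e i)) = contractOp (A x) := by
  have h := expand_sum e (contractL ∘ₗ A) x
  simpa only [LinearMap.comp_apply, contractL_apply] using h

lemma expand_contract_skew {n : ℕ} (e : OrthonormalBasis (Fin n) ℝ V) (A : V →ₗ[ℝ] V)
    (hA : ∀ v w : V, ⟪A v, w⟫ = -⟪v, A w⟫) (x : V) :
    ∑ i, ⟪A (e i), x⟫ • contractOp (e i) = -(contractOp (A x)) := by
  have h := expand_contract e (A x)
  have h1 : ∀ i : Fin n, ⟪A (e i), x⟫ = -⟪e i, A x⟫ := fun i => hA (e i) x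
  simp_rw [h1, neg_smul (M := Module.End ℝ (ExteriorAlgebra ℝ V))]
  rw [Finset.sum_neg_distrib, h]

/-- The key commutation relation `[L_A, 𝒥_B] = L_{[A,B]}` for skew-adjoint `A`, `B`. -/
lemma Lop_mul_Jop {n : ℕ} (e : OrthonormalBasis (Fin n) ℝ V) (A B : V →ₗ[ℝ] V)
    (hA : ∀ v w : V, ⟪A v, w⟫ = -⟪v, A w⟫) (hB : ∀ v w : V, ⟪B v, w⟫ = -⟪v, B w⟫) :
    Lop e A * Jop e B = Jop e B * Lop e A + Lop e (A * B - B * A) := by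
  set L' := ∑ i, wedgeOp (e i) * wedgeOp (A (e i)) with hL'
  set K' := ∑ i, wedgeOp (B (e i)) * contractOp (e i) with hK'
  set D := ∑ i, wedgeOp (e i) * wedgeOp ((A * B - B * A) (e i)) with hD
  have step1 : ∀ j, contractOp (e j) * L'
      = (wedgeOp (A (e j)) + wedgeOp (A (e j))) + L' * contractOp (e j) := by
    intro j
    rw [hL', Finset.mul_sum]
    simp_rw [contract_mul_wedge_pair (e j)]
    rw [Finset.sum_add_distrib, Finset.sum_sub_distrib, ← Finset.sum_mul, ← hL',
      expand_wedgeA' e A (e j), expand_wedge_skew e A hA (e j)]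
    abel
  have step2 : ∀ v : V, wedgeOp v * L' = L' * wedgeOp v := by
    intro v
    rw [hL', Finset.mul_sum, Finset.sum_mul]
    exact Finset.sum_congr rfl fun i _ => wedge_comm_pair v (e i) (A (e i))
  have hS1 : ∑ i, wedgeOp (e i) * wedgeOp (A (B (e i)))
      = -(∑ i, wedgeOp (B (e i)) * wedgeOp (A (e i))) := by
    have hBt : ∀ v w : V, ⟪B v, w⟫ = ⟪v, (-B) w⟫ := fun v w => by
      rw [hB, LinearMap.neg_apply, inner_neg_right]
    have h := reindex e wedgeL (wedgeL ∘ₗ A) B (-B) hBt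
    simp only [LinearMap.comp_apply, wedgeL_apply, LinearMap.neg_apply, map_neg, mul_neg (α := Module.End ℝ (ExteriorAlgebra ℝ V)),
      Finset.sum_neg_distrib] at h
    exact (neg_eq_iff_eq_neg.mpr h).symm
  have hS2 : ∑ i, wedgeOp (e i) * wedgeOp (B (A (e i)))
      = ∑ i, wedgeOp (B (e i)) * wedgeOp (A (e i)) := by
    have hAt : ∀ v w : V, ⟪A v, w⟫ = ⟪v, (-A) w⟫ := fun v w => by
      rw [hA, LinearMap.neg_apply, inner_neg_right]
    have h := reindex e wedgeL (wedgeL ∘ₗ B) A (-A) hAt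
    simp only [LinearMap.comp_apply, wedgeL_apply, LinearMap.neg_apply, map_neg, mul_neg (α := Module.End ℝ (ExteriorAlgebra ℝ V)),
      Finset.sum_neg_distrib] at h
    have h2 : ∑ i, wedgeOp (B (e i)) * wedgeOp (A (e i))
        = -∑ i, wedgeOp (A (e i)) * wedgeOp (B (e i)) := by
      rw [← Finset.sum_neg_distrib]
      exact Finset.sum_congr rfl fun i _ => wedge_wedge _ _
    rw [(neg_eq_iff_eq_neg.mpr h).symm, h2]
  have hDeq : D = -(∑ i, wedgeOp (B (e i)) * wedgeOp (A (e i)))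
      - ∑ i, wedgeOp (B (e i)) * wedgeOp (A (e i)) := by
    rw [hD]
    simp_rw [LinearMap.sub_apply, Module.End.mul_apply, wedgeOp_sub, mul_sub]
    rw [Finset.sum_sub_distrib, hS1, hS2]
  have main : K' * L' = -D + L' * K' := by
    have e1 : K' * L' = ∑ j, wedgeOp (B (e j)) * (contractOp (e j) * L') := by
      rw [hK', Finset.sum_mul]
      simp_rw [mul_assoc]
    rw [e1]
    simp_rw [step1, mul_add]
    rw [Finset.sum_add_distrib]
    have e2 : ∑ j, wedgeOp (B (e j)) * (L' * contractOp (e j)) = L' * K' := by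
      simp_rw [← mul_assoc, step2, mul_assoc]
      rw [← Finset.mul_sum, ← hK']
    rw [e2]
    have e3 : ∑ j, (wedgeOp (B (e j)) * wedgeOp (A (e j))
        + wedgeOp (B (e j)) * wedgeOp (A (e j))) = -D := by
      rw [Finset.sum_add_distrib, hDeq]
      abel
    rw [e3]
  have lmain : L' * K' = K' * L' + D := by
    rw [main]
    abel
  rw [Lop_eq e A, Lop_eq e (A * B - B * A), Jop_eq e B, ← hL', ← hK', ← hD]
  rw [smul_mul_assoc, lmain, smul_add, mul_smul_comm]

/-- The key commutation relation `[Λ_A, 𝒥_B] = Λ_{[A,B]}` for skew-adjoint `A`, `B`. -/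
lemma Lambdaop_mul_Jop {n : ℕ} (e : OrthonormalBasis (Fin n) ℝ V) (A B : V →ₗ[ℝ] V)
    (hA : ∀ v w : V, ⟪A v, w⟫ = -⟪v, A w⟫) (hB : ∀ v w : V, ⟪B v, w⟫ = -⟪v, B w⟫) :
    Lambdaop e A * Jop e B = Jop e B * Lambdaop e A + Lambdaop e (A * B - B * A) := by
  set L' := ∑ i, contractOp (e i) * contractOp (A (e i)) with hL'
  set K' := ∑ i, wedgeOp (B (e i)) * contractOp (e i) with hK'
  set D := ∑ i, contractOp (e i) * contractOp ((A * B - B * A) (e i)) with hD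
  have step1 : ∀ v : V, L' * wedgeOp v
      = -(contractOp (A v)) - contractOp (A v) + wedgeOp v * L' := by
    intro v
    rw [hL', Finset.sum_mul]
    simp_rw [contract_pair_mul_wedge]
    rw [Finset.sum_add_distrib, Finset.sum_sub_distrib, ← Finset.mul_sum, ← hL',
      expand_contract_skew e A hA v, expand_contractA e A v]
  have step2 : ∀ v : V, L' * contractOp v = contractOp v * L' := by
    intro v
    rw [hL', Finset.sum_mul, Finset.mul_sum]
    exact Finset.sum_congr rfl fun i _ => (contract_comm_pair v (e i) (A (e i))).symm
  have hU4 : ∑ i, contractOp (A (B (e i))) * contractOp (e i)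
      = ∑ i, contractOp (e i) * contractOp (B (A (e i))) := by
    have hABt : ∀ v w : V, ⟪(A * B) v, w⟫ = ⟪v, (B * A) w⟫ := fun v w => by
      simp only [Module.End.mul_apply]
      rw [hA, hB, neg_neg]
    have h := reindex e contractL contractL (A * B) (B * A) hABt
    simpa only [contractL_apply, Module.End.mul_apply] using h
  have hU5 : ∑ i, contractOp (A (B (e i))) * contractOp (e i)
      = -(∑ i, contractOp (e i) * contractOp (A (B (e i)))) := by
    rw [← Finset.sum_neg_distrib]
    exact Finset.sum_congr rfl fun i _ => contract_contract _ _
  have hDeq : D = -(∑ i, contractOp (A (B (e i))) * contractOp (e i))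
      - ∑ i, contractOp (A (B (e i))) * contractOp (e i) := by
    rw [hD]
    simp_rw [LinearMap.sub_apply, Module.End.mul_apply, contractOp_sub, mul_sub]
    rw [Finset.sum_sub_distrib, (neg_eq_iff_eq_neg.mpr hU5).symm, ← hU4]
  have main : L' * K' = D + K' * L' := by
    have e1 : L' * K' = ∑ j, (L' * wedgeOp (B (e j))) * contractOp (e j) := by
      rw [hK', Finset.mul_sum]
      simp_rw [← mul_assoc]
    rw [e1]
    simp_rw [step1, add_mul, sub_mul, neg_mul (α := Module.End ℝ (ExteriorAlgebra ℝ V))]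
    have e2 : ∀ j, (wedgeOp (B (e j)) * L') * contractOp (e j)
        = (wedgeOp (B (e j)) * contractOp (e j)) * L' := fun j => by
      rw [mul_assoc, step2 (e j), ← mul_assoc]
    simp_rw [e2]
    rw [Finset.sum_add_distrib, Finset.sum_sub_distrib, Finset.sum_neg_distrib,
      ← Finset.sum_mul, ← hK', ← hDeq]
  rw [Lambdaop_eq e A, Lambdaop_eq e (A * B - B * A), Jop_eq e B, ← hL', ← hK', ← hD]
  rw [neg_mul (α := Module.End ℝ (ExteriorAlgebra ℝ V)), smul_mul_assoc, main, mul_neg (α := Module.End ℝ (ExteriorAlgebra ℝ V)), mul_smul_comm, smul_add]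
  abel

/-- Purely algebraic commutation lemma in a ring. -/
lemma ring_key {R : Type*} [Ring R] {l1 m1 l2 m2 l3 m3 k : R}
    (h1 : l1 * k = k * l1 + (l3 + l3)) (h2 : m1 * k = k * m1 + (m3 + m3))
    (h3 : l3 * k = k * l3 - (l1 + l1)) (h4 : m3 * k = k * m3 - (m1 + m1))
    (h5 : l2 * k = k * l2) (h6 : m2 * k = k * m2) :
    (l1 * m1 + l2 * m2 + l3 * m3) * k = k * (l1 * m1 + l2 * m2 + l3 * m3) := by
  calc (l1 * m1 + l2 * m2 + l3 * m3) * k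
      = l1 * (m1 * k) + l2 * (m2 * k) + l3 * (m3 * k) := by noncomm_ring
    _ = l1 * (k * m1 + (m3 + m3)) + l2 * (k * m2) + l3 * (k * m3 - (m1 + m1)) := by
        rw [h2, h4, h6]
    _ = (l1 * k) * m1 + (l2 * k) * m2 + (l3 * k) * m3
        + ((l1 * m3 + l1 * m3) - (l3 * m1 + l3 * m1)) := by noncomm_ring
    _ = (k * l1 + (l3 + l3)) * m1 + (k * l2) * m2 + (k * l3 - (l1 + l1)) * m3
        + ((l1 * m3 + l1 * m3) - (l3 * m1 + l3 * m1)) := by rw [h1, h3, h5]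
    _ = k * (l1 * m1 + l2 * m2 + l3 * m3) := by noncomm_ring

end Aux


theorem C_commutes_with_K
    [FiniteDimensional ℝ V] {m : ℕ} (hm : 1 ≤ m) (hdim : Module.finrank ℝ V = 4 * m)
    (e : OrthonormalBasis (Fin (4 * m)) ℝ V) (J : Fin 3 → V →ₗ[ℝ] V)
    (hJ2 : ∀ α, (J α).comp (J α) = -LinearMap.id)
    (hJiso : ∀ α, ∀ v w : V, ⟪J α v, J α w⟫ = ⟪v, w⟫)
    (hJ12 : (J 0).comp (J 1) = J 2) (hJ21 : (J 1).comp (J 0) = -(J 2)) :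
    (∑ α, (Lop e (J α)).comp (Lambdaop e (J α))).comp
        (∑ α, (Jop e (J α)).comp (Jop e (J α)))
      = (∑ α, (Jop e (J α)).comp (Jop e (J α))).comp
          (∑ α, (Lop e (J α)).comp (Lambdaop e (J α))) := by
  simp only [← Module.End.mul_eq_comp]
  -- each `J α` is skew-adjoint
  have hskew : ∀ α, ∀ v w : V, ⟪J α v, w⟫ = -⟪v, J α w⟫ := by
    intro α v w
    have h2 : J α (J α w) = -w := by
      have := LinearMap.ext_iff.mp (hJ2 α) w
      simpa using this
    calc ⟪J α v, w⟫ = ⟪J α v, -(J α (J α w))⟫ := by rw [h2, neg_neg]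
      _ = -⟪J α v, J α (J α w)⟫ := by rw [inner_neg_right]
      _ = -⟪v, J α w⟫ := by rw [hJiso]
  have hLJ : ∀ α β : Fin 3, Lop e (J α) * Jop e (J β)
      = Jop e (J β) * Lop e (J α) + Lop e (J α * J β - J β * J α) :=
    fun α β => Lop_mul_Jop e _ _ (hskew α) (hskew β)
  have hMJ : ∀ α β : Fin 3, Lambdaop e (J α) * Jop e (J β)
      = Jop e (J β) * Lambdaop e (J α) + Lambdaop e (J α * J β - J β * J α) :=
    fun α β => Lambdaop_mul_Jop e _ _ (hskew α) (hskew β)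
  -- the quaternionic multiplication table, in `End` form
  have m12 : J 0 * J 1 = J 2 := hJ12
  have m21 : J 1 * J 0 = -(J 2) := hJ21
  have sq : ∀ α, J α * J α = -1 := fun α => hJ2 α
  have t21 : J 2 * J 1 = -(J 0) := by rw [← m12, mul_assoc, sq 1, mul_neg_one]
  have t02 : J 0 * J 2 = -(J 1) := by rw [← m12, ← mul_assoc, sq 0, neg_one_mul]
  have t12 : J 1 * J 2 = J 0 := by rw [← m12, ← mul_assoc, m21, neg_mul, t21, neg_neg]
  have t20 : J 2 * J 0 = J 1 := by rw [← m12, mul_assoc, m21, mul_neg, t02, neg_neg]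
  -- commutators of the complex structures
  have c20 : J 2 * J 0 - J 0 * J 2 = J 1 + J 1 := by rw [t20, t02]; abel
  have c10 : J 1 * J 0 - J 0 * J 1 = -(J 2 + J 2) := by rw [m21, m12]; abel
  have c01 : J 0 * J 1 - J 1 * J 0 = J 2 + J 2 := by rw [m12, m21]; abel
  have c21 : J 2 * J 1 - J 1 * J 2 = -(J 0 + J 0) := by rw [t21, t12]; abel
  have c12 : J 1 * J 2 - J 2 * J 1 = J 0 + J 0 := by rw [t12, t21]; abel
  have c02 : J 0 * J 2 - J 2 * J 0 = -(J 1 + J 1) := by rw [t02, t20]; abel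
  -- instantiated commutation relations
  have relL : ∀ a b c : Fin 3, J a * J b - J b * J a = J c + J c →
      Lop e (J a) * Jop e (J b) = Jop e (J b) * Lop e (J a)
        + (Lop e (J c) + Lop e (J c)) := by
    intro a b c h
    rw [hLJ a b, h, Lop_add]
  have relL' : ∀ a b c : Fin 3, J a * J b - J b * J a = -(J c + J c) →
      Lop e (J a) * Jop e (J b) = Jop e (J b) * Lop e (J a)
        - (Lop e (J c) + Lop e (J c)) := by
    intro a b c h
    rw [hLJ a b, h, Lop_neg, Lop_add, ← sub_eq_add_neg]
  have relL0 : ∀ a : Fin 3, Lop e (J a) * Jop e (J a) = Jop e (J a) * Lop e (J a) := by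
    intro a
    rw [hLJ a a, sub_self, Lop_zero, add_zero]
  have relM : ∀ a b c : Fin 3, J a * J b - J b * J a = J c + J c →
      Lambdaop e (J a) * Jop e (J b) = Jop e (J b) * Lambdaop e (J a)
        + (Lambdaop e (J c) + Lambdaop e (J c)) := by
    intro a b c h
    rw [hMJ a b, h, Lambdaop_add]
  have relM' : ∀ a b c : Fin 3, J a * J b - J b * J a = -(J c + J c) →
      Lambdaop e (J a) * Jop e (J b) = Jop e (J b) * Lambdaop e (J a)
        - (Lambdaop e (J c) + Lambdaop e (J c)) := by
    intro a b c h
    rw [hMJ a b, h, Lambdaop_neg, Lambdaop_add, ← sub_eq_add_neg]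
  have relM0 : ∀ a : Fin 3, Lambdaop e (J a) * Jop e (J a)
      = Jop e (J a) * Lambdaop e (J a) := by
    intro a
    rw [hMJ a a, sub_self, Lambdaop_zero, add_zero]
  -- the operator C commutes with each 𝒥_β
  have hC0 : (∑ α, Lop e (J α) * Lambdaop e (J α)) * Jop e (J 0)
      = Jop e (J 0) * ∑ α, Lop e (J α) * Lambdaop e (J α) := by
    rw [Fin.sum_univ_three fun α => Lop e (J α) * Lambdaop e (J α)]
    have e1 : Lop e (J 0) * Lambdaop e (J 0) + Lop e (J 1) * Lambdaop e (J 1)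
          + Lop e (J 2) * Lambdaop e (J 2)
        = Lop e (J 2) * Lambdaop e (J 2) + Lop e (J 0) * Lambdaop e (J 0)
          + Lop e (J 1) * Lambdaop e (J 1) := by abel
    rw [e1]
    exact ring_key (relL 2 0 1 c20) (relM 2 0 1 c20) (relL' 1 0 2 c10) (relM' 1 0 2 c10)
      (relL0 0) (relM0 0)
  have hC1 : (∑ α, Lop e (J α) * Lambdaop e (J α)) * Jop e (J 1)
      = Jop e (J 1) * ∑ α, Lop e (J α) * Lambdaop e (J α) := by
    rw [Fin.sum_univ_three fun α => Lop e (J α) * Lambdaop e (J α)]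
    exact ring_key (relL 0 1 2 c01) (relM 0 1 2 c01) (relL' 2 1 0 c21) (relM' 2 1 0 c21)
      (relL0 1) (relM0 1)
  have hC2 : (∑ α, Lop e (J α) * Lambdaop e (J α)) * Jop e (J 2)
      = Jop e (J 2) * ∑ α, Lop e (J α) * Lambdaop e (J α) := by
    rw [Fin.sum_univ_three fun α => Lop e (J α) * Lambdaop e (J α)]
    have e1 : Lop e (J 0) * Lambdaop e (J 0) + Lop e (J 1) * Lambdaop e (J 1)
          + Lop e (J 2) * Lambdaop e (J 2)
        = Lop e (J 1) * Lambdaop e (J 1) + Lop e (J 2) * Lambdaop e (J 2)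
          + Lop e (J 0) * Lambdaop e (J 0) := by abel
    rw [e1]
    exact ring_key (relL 1 2 0 c12) (relM 1 2 0 c12) (relL' 0 2 1 c02) (relM' 0 2 1 c02)
      (relL0 2) (relM0 2)
  rw [Finset.mul_sum, Finset.sum_mul]
  refine Finset.sum_congr rfl fun β _ => ?_
  have hCβ : (∑ α, Lop e (J α) * Lambdaop e (J α)) * Jop e (J β)
      = Jop e (J β) * ∑ α, Lop e (J α) * Lambdaop e (J α) := by
    fin_cases β
    · exact hC0
    · exact hC1
    · exact hC2
  rw [← mul_assoc, hCβ, mul_assoc, hCβ, ← mul_assoc]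
end

section
/- Let p ≥ 2 be an integer and let k, k′ ≥ 0 be integers with |k − k′| = 1 satisfying (p+1)(3 − k(k+2)) = −(p−1)·k′(k′+2). Then either (k, k′) = (p, p+1) or (k, k′) = (1, 0). (This determines the possible Sym^kH-components of a Killing p-form u and of du from the first equation of system (sys1) with the Casimir eigenvalues j = −k(k+2), j′ = −k′(k′+2).) -/
/-!
Substituting `k' = k ∓ 1` turns the relation into a quadratic equation in `k` that factors:
the difference of the two sides is `-2 (k - 1)(k + p + 2)` for `k' = k - 1` and
`-2 (k - p)(k + 3)` for `k' = k + 1`. Since the second factors are positive, `k = 1` resp. `k = p`.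
-/

theorem mul_eq_zero_of_weight_relation_pred {p k : ℤ}
    (h : (p + 1) * (3 - k * (k + 2)) = -(p - 1) * ((k - 1) * (k - 1 + 2))) :
    (k - 1) * (k + p + 2) = 0 :=
  mul_left_cancel₀ two_ne_zero (by linear_combination -h)

theorem mul_eq_zero_of_weight_relation_succ {p k : ℤ}
    (h : (p + 1) * (3 - k * (k + 2)) = -(p - 1) * ((k + 1) * (k + 1 + 2))) :
    (k - p) * (k + 3) = 0 :=
  mul_left_cancel₀ two_ne_zero (by linear_combination -h)

theorem sl2_weight_analysis_general (p k k' : ℤ) (hp : 2 ≤ p) (hk : 0 ≤ k)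
    (hkk' : |k - k'| = 1)
    (heq : (p + 1) * (3 - k * (k + 2)) = -(p - 1) * (k' * (k' + 2))) :
    (k = p ∧ k' = p + 1) ∨ (k = 1 ∧ k' = 0) := by
  obtain rfl | rfl : k' = k - 1 ∨ k' = k + 1 := by
    rcases (abs_eq zero_le_one).mp hkk' with h | h <;> omega
  · rcases mul_eq_zero.mp (mul_eq_zero_of_weight_relation_pred heq) with h | h <;> omega
  · rcases mul_eq_zero.mp (mul_eq_zero_of_weight_relation_succ heq) with h | h <;> omega

theorem sl2_weight_analysis (p k k' : ℤ) (hp : 2 ≤ p) (hk : 0 ≤ k) (hk' : 0 ≤ k')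
    (hkk' : |k - k'| = 1)
    (heq : (p + 1) * (3 - k * (k + 2)) = -(p - 1) * (k' * (k' + 2))) :
    (k = p ∧ k' = p + 1) ∨ (k = 1 ∧ k' = 0) :=
  sl2_weight_analysis_general p k k' hp hk hkk' heq
end

section
/- There are no integers m ≥ 2, p ≥ 2, a, a′ with 0 ≤ a ≤ m, |a − a′| = 1, satisfying simultaneously (p − a)(2m + 2 − p − a) = −p(p − 1) and (p + 1 − a′)(2m + 1 − p − a′) = −p(p + 1). (This is Case 1, k = p and k′ = p+1, of the numerical analysis in the proof of the main theorem.) -/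
/-!
Subtracting the two equations cancels their quadratic terms. For `a' = a - 1` this leaves
`a = 2m + 2 > m`; for `a' = a + 1` it leaves `a = 0`, and then the first equation reads
`p (2m + 1) = 0`, impossible for `p ≥ 2`.
-/

section CaseOne

variable {m p a : ℤ}

lemma eq_two_mul_add_two_of_case_one_pred
    (h₁ : (p - a) * (2 * m + 2 - p - a) = -(p * (p - 1)))
    (h₂ : (p + 1 - (a - 1)) * (2 * m + 1 - p - (a - 1)) = -(p * (p + 1))) :
    a = 2 * m + 2 := by
  have h : 2 * (a - (2 * m + 2)) = 0 := by linear_combination h₁ - h₂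
  omega

lemma eq_zero_of_case_one_succ
    (h₁ : (p - a) * (2 * m + 2 - p - a) = -(p * (p - 1)))
    (h₂ : (p + 1 - (a + 1)) * (2 * m + 1 - p - (a + 1)) = -(p * (p + 1))) :
    a = 0 := by
  have h : 2 * a = 0 := by linear_combination h₂ - h₁
  omega

end CaseOne

theorem case_one_no_solutions :
    ¬ ∃ m p a a' : ℤ, 2 ≤ m ∧ 2 ≤ p ∧ 0 ≤ a ∧ a ≤ m ∧ |a - a'| = 1 ∧
      (p - a) * (2 * m + 2 - p - a) = -(p * (p - 1)) ∧
      (p + 1 - a') * (2 * m + 1 - p - a') = -(p * (p + 1)) := by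
  rintro ⟨m, p, a, a', hm, hp, -, ham, habs, h₁, h₂⟩
  obtain rfl | rfl : a' = a - 1 ∨ a' = a + 1 := by
    rcases abs_eq zero_le_one |>.mp habs with h | h
    · exact .inl (by linarith)
    · exact .inr (by linarith)
  · have := eq_two_mul_add_two_of_case_one_pred h₁ h₂
    omega
  · obtain rfl := eq_zero_of_case_one_succ h₁ h₂
    have h : p * (2 * m + 1) = 0 := by linear_combination h₁
    rcases mul_eq_zero.mp h with h | h <;> omega
end

section
/- Let m ≥ 2 and p ≥ 2 be integers and let a, b, a′, b′ ≥ 0 be integers with b ≤ a, 2a ≤ p + 1, 2a ≤ 4m − p + 1, |a − a′| + |b − b′| = 1, satisfying the equation 2m − p − 2 − 2b′ + 2b + a′² − a² + b′² − b² + 2(m+1)(a + b − a′ − b′) = 0. Then a′ = a − 1, b′ = b, and 4m − p = 2a − 1. (This is Case 2, k = 1 and k′ = 0, of the numerical analysis in the proof of the main theorem: among the four possible neighbours (a′,b′) of (a,b) in ℤ², only (a−1, b) is possible, and then 4m − p = 2a − 1.) -/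
/-!
For each of the four lattice neighbours `(a′, b′)` of `(a, b)` the equation collapses to a
linear relation: `2a = p + 3`, `2a = 4m − p + 1`, `2b = p + 5` or `2b = 4m − p + 3`. Since
`2b ≤ 2a ≤ min (p + 1) (4m − p + 1)`, only the second one, i.e. `(a′, b′) = (a − 1, b)`, survives.
-/

lemma Int.eq_neighbour_of_abs_sub_add_abs_sub_eq_one {a b a' b' : ℤ}
    (h : |a - a'| + |b - b'| = 1) :
    (a' = a + 1 ∧ b' = b) ∨ (a' = a - 1 ∧ b' = b) ∨
      (a' = a ∧ b' = b + 1) ∨ (a' = a ∧ b' = b - 1) := by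
  rcases abs_cases (a - a') with ⟨ha, _⟩ | ⟨ha, _⟩ <;>
    rcases abs_cases (b - b') with ⟨hb, _⟩ | ⟨hb, _⟩ <;> omega

theorem case_two_analysis_general (m p a b a' b' : ℤ)
    (hba : b ≤ a) (h2a : 2 * a ≤ p + 1) (h2a' : 2 * a ≤ 4 * m - p + 1)
    (hnb : |a - a'| + |b - b'| = 1)
    (heq : 2 * m - p - 2 - 2 * b' + 2 * b + a' ^ 2 - a ^ 2 + b' ^ 2 - b ^ 2
        + 2 * (m + 1) * (a + b - a' - b') = 0) :
    a' = a - 1 ∧ b' = b ∧ 4 * m - p = 2 * a - 1 := by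
  rcases Int.eq_neighbour_of_abs_sub_add_abs_sub_eq_one hnb with
    ⟨rfl, rfl⟩ | ⟨rfl, rfl⟩ | ⟨rfl, rfl⟩ | ⟨rfl, rfl⟩
  · have : 2 * a = p + 3 := by linear_combination heq
    omega
  · exact ⟨rfl, rfl, by linear_combination heq⟩
  · have : 2 * b = p + 5 := by linear_combination heq
    omega
  · have : 2 * b = 4 * m - p + 3 := by linear_combination -heq
    omega

theorem case_two_analysis (m p a b a' b' : ℤ) (hm : 2 ≤ m) (hp : 2 ≤ p)
    (ha : 0 ≤ a) (hb : 0 ≤ b) (ha' : 0 ≤ a') (hb' : 0 ≤ b')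
    (hba : b ≤ a) (h2a : 2 * a ≤ p + 1) (h2a' : 2 * a ≤ 4 * m - p + 1)
    (hnb : |a - a'| + |b - b'| = 1)
    (heq : 2 * m - p - 2 - 2 * b' + 2 * b + a' ^ 2 - a ^ 2 + b' ^ 2 - b ^ 2
        + 2 * (m + 1) * (a + b - a' - b') = 0) :
    a' = a - 1 ∧ b' = b ∧ 4 * m - p = 2 * a - 1 :=
  case_two_analysis_general m p a b a' b' hba h2a h2a' hnb heq
end
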